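/- Let n be a positive integer divisible by 330. Consider the hereditary set system whose items consist of six classes: n items of class A, n/3 of class B, 2n/3 of class C, 2n/3 of class D, n/3 of class E, and 40n of class F, where a set is feasible if and only if it contains at most 2 items of class A, at most 1 of class B, at most 2 of class C, at most 5 of class D, at most 11 of class E, and at most 40 of class F. Each agent values each item of classes A, B, C, D, E, F at 40/107, 23/107, 17/107, 10/107, 4/107, 1/107 respectively, with induced valuation v. Then there exists a partition of all the items into n parts, each part feasible and of value exactly 1 under v (2n/3 parts each consisting of one A, one C, one D and forty F items, and n/3 parts each consisting of one A, one B, one E and forty F items); in particular the maximin share of every agent in this instance with n agents is at least 1. -/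
import Mathlib


open Finset

/-- The induced valuation of a set system `F` with item values `v`:
`hsVal F v S` is the maximum of `∑ j ∈ T, v j` over feasible `T ⊆ S`
(with the empty set always a candidate, as `∅ ∈ F` for hereditary systems). -/
noncomputable def hsVal {ι : Type*} (F : Finset ι → Prop) (v : ι → ℝ) (S : Finset ι) : ℝ :=
  letI := Classical.decEq ι
  letI := Classical.decPred F
  (insert (∅ : Finset ι) (S.powerset.filter F)).sup' (Finset.insert_nonempty _ _)
    fun T => ∑ j ∈ T, v j

/-- The maximin share of an agent with valuation induced by `F` and `v`, for `n` agents: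
the maximum over partitions of the items into `n` parts (fibers of `π : ι → Fin n`)
of the minimum value of a part. -/
noncomputable def hsMMS {ι : Type*} [Fintype ι] (F : Finset ι → Prop) (v : ι → ℝ) (n : ℕ) : ℝ :=
  ⨆ π : ι → Fin n, ⨅ k : Fin n, hsVal F v (Finset.univ.filter fun j => π j = k)

/-- Number of items in each of the six classes A, B, C, D, E, F. -/
def classCount (n : ℕ) : Fin 6 → ℕ := ![n, n / 3, 2 * n / 3, 2 * n / 3, n / 3, 40 * n]

/-- The items: pairs of a class and an index within that class. -/
abbrev HssItem (n : ℕ) := (k : Fin 6) × Fin (classCount n k)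

/-- Capacity of each class: a set is feasible iff it has at most this many items
of each class. -/
def classCap : Fin 6 → ℕ := ![2, 1, 2, 5, 11, 40]

/-- The value of an item in each class. -/
noncomputable def classValue : Fin 6 → ℝ :=
  ![40 / 107, 23 / 107, 17 / 107, 10 / 107, 4 / 107, 1 / 107]

/-- The feasible sets: per-class capacity constraints (a partition matroid). -/
def hssFeasible (n : ℕ) (S : Finset (HssItem n)) : Prop :=
  ∀ k : Fin 6, (S.filter fun it => it.1 = k).card ≤ classCap k

/-- Item values: each item is worth the value of its class. -/
noncomputable def hssValue (n : ℕ) : HssItem n → ℝ := fun it => classValue it.1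

/-- A part of Type I: one item of each of classes A, C, D and forty items of class F. -/
def typeI (n : ℕ) (P : Finset (HssItem n)) : Prop :=
  ∀ k : Fin 6, (P.filter fun it => it.1 = k).card = ![1, 0, 1, 1, 0, 40] k

/-- A part of Type II: one item of each of classes A, B, E and forty items of class F. -/
def typeII (n : ℕ) (P : Finset (HssItem n)) : Prop :=
  ∀ k : Fin 6, (P.filter fun it => it.1 = k).card = ![1, 1, 0, 0, 1, 40] k

open Classical

lemma hsVal_eq_sum' {ι : Type*} (F : Finset ι → Prop) (v : ι → ℝ) (S : Finset ι)
    (hF : F S) (hv : ∀ j, 0 ≤ v j) : hsVal F v S = ∑ j ∈ S, v j := by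
  classical
  unfold hsVal
  apply le_antisymm
  · apply Finset.sup'_le
    intro T hT
    rcases Finset.mem_insert.1 hT with h | h
    · subst h; simp; exact Finset.sum_nonneg fun j _ => hv j
    · rcases Finset.mem_filter.1 h with ⟨hT, _⟩
      exact Finset.sum_le_sum_of_subset_of_nonneg (Finset.mem_powerset.1 hT)
        (fun j _ _ => hv j)
  · apply Finset.le_sup' (f := fun T => ∑ j ∈ T, v j)
    exact Finset.mem_insert.2 (Or.inr (Finset.mem_filter.2 ⟨Finset.mem_powerset.2 le_rfl, hF⟩))

lemma hsVal_nonneg' {ι : Type*} (F : Finset ι → Prop) (v : ι → ℝ) (S : Finset ι) :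
    0 ≤ hsVal F v S := by
  classical
  unfold hsVal
  have := Finset.le_sup' (fun T : Finset ι => ∑ j ∈ T, v j)
    (Finset.mem_insert_self (∅ : Finset ι) (S.powerset.filter F))
  simpa using this

lemma hsVal_le_total' {ι : Type*} [Fintype ι] (F : Finset ι → Prop) (v : ι → ℝ)
    (S : Finset ι) (hv : ∀ j, 0 ≤ v j) : hsVal F v S ≤ ∑ j, v j := by
  classical
  unfold hsVal
  apply Finset.sup'_le
  intro T hT
  exact Finset.sum_le_sum_of_subset_of_nonneg (Finset.subset_univ T) (fun j _ _ => hv j)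

lemma card_filter_val (N : ℕ) (Q : ℕ → Prop) [DecidablePred Q] :
    (Finset.univ.filter fun i : Fin N => Q i.val).card = ((Finset.range N).filter Q).card := by
  apply Finset.card_bij (fun i _ => i.val)
  · intro a ha; simp only [Finset.mem_filter, Finset.mem_univ, true_and] at ha
    simp only [Finset.mem_filter, Finset.mem_range]
    exact ⟨a.isLt, ha⟩
  · intro a _ b _ h; exact Fin.ext h
  · intro b hb; simp only [Finset.mem_filter, Finset.mem_range] at hb
    exact ⟨⟨b, hb.1⟩, by simp [hb.2], rfl⟩
/-- The assignment of items to parts, as a natural number. -/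
def aN (m : ℕ) {n : ℕ} (it : HssItem n) : ℕ :=
  if it.1.val = 5 then it.2.val / 40
  else if it.1.val = 1 ∨ it.1.val = 4 then 2 * m + it.2.val
  else it.2.val

lemma aN_0 (m n : ℕ) (i : Fin (classCount n 0)) : aN m (⟨0, i⟩ : HssItem n) = i.val := rfl
lemma aN_1 (m n : ℕ) (i : Fin (classCount n 1)) : aN m (⟨1, i⟩ : HssItem n) = 2 * m + i.val := rfl
lemma aN_2 (m n : ℕ) (i : Fin (classCount n 2)) : aN m (⟨2, i⟩ : HssItem n) = i.val := rfl
lemma aN_3 (m n : ℕ) (i : Fin (classCount n 3)) : aN m (⟨3, i⟩ : HssItem n) = i.val := rfl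
lemma aN_4 (m n : ℕ) (i : Fin (classCount n 4)) : aN m (⟨4, i⟩ : HssItem n) = 2 * m + i.val := rfl
lemma aN_5 (m n : ℕ) (i : Fin (classCount n 5)) : aN m (⟨5, i⟩ : HssItem n) = i.val / 40 := rfl

lemma card_filter_val' (N : ℕ) (P : Fin N → Prop) [DecidablePred P]
    (Q : ℕ → Prop) [DecidablePred Q] (h : ∀ i : Fin N, P i ↔ Q i.val) :
    (Finset.univ.filter P).card = ((Finset.range N).filter Q).card := by
  rw [Finset.card_filter, Finset.card_filter,
    ← Fin.sum_univ_eq_sum_range (fun x => if Q x then 1 else 0) N]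
  exact Finset.sum_congr rfl (fun i _ => by simp [h i])

lemma fiber_count (m n : ℕ) (π : HssItem n → Fin n)
    (hπ : ∀ it, (π it).val = aN m it) (p : Fin n) (k : Fin 6) :
    ((Finset.univ.filter fun it : HssItem n => π it = p).filter fun it => it.1 = k).card
      = (Finset.univ.filter
          fun i : Fin (classCount n k) => aN m (⟨k, i⟩ : HssItem n) = p.val).card := by
  classical
  rw [Finset.filter_filter]
  symm
  apply Finset.card_bij (fun i _ => (⟨k, i⟩ : HssItem n))
  · intro i hi
    simp only [Finset.mem_filter, Finset.mem_univ, true_and] at hi ⊢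
    refine ⟨Fin.ext ?_, trivial⟩
    rw [hπ]; exact hi
  · intro a _ b _ h
    simpa using h
  · rintro ⟨k', i⟩ hit
    simp only [Finset.mem_filter, Finset.mem_univ, true_and] at hit
    obtain ⟨h1, h2⟩ := hit
    subst h2
    refine ⟨i, ?_, rfl⟩
    simp only [Finset.mem_filter, Finset.mem_univ, true_and]
    rw [← hπ]
    exact congrArg Fin.val h1

lemma vec6_0 {α : Type*} (a b c d e f : α) : ![a,b,c,d,e,f] 0 = a := rfl
lemma vec6_1 {α : Type*} (a b c d e f : α) : ![a,b,c,d,e,f] 1 = b := rfl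
lemma vec6_2 {α : Type*} (a b c d e f : α) : ![a,b,c,d,e,f] 2 = c := rfl
lemma vec6_3 {α : Type*} (a b c d e f : α) : ![a,b,c,d,e,f] 3 = d := rfl
lemma vec6_4 {α : Type*} (a b c d e f : α) : ![a,b,c,d,e,f] 4 = e := rfl
lemma vec6_5 {α : Type*} (a b c d e f : α) : ![a,b,c,d,e,f] 5 = f := rfl
/-- For `n` divisible by 330, in the six-class partition-matroid instance
there is a partition of all the items into `n` parts, each part feasible and of value
exactly 1 (with `2n/3` parts of Type I and `n/3` parts of Type II); in particular the
maximin share of every agent in this instance with `n` agents is at least 1. -/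
theorem hss_upper_bound_instance (n : ℕ) (hn : 0 < n) (hdvd : 330 ∣ n) :
    (∃ π : HssItem n → Fin n,
      (∀ p : Fin n,
        hssFeasible n (Finset.univ.filter fun it => π it = p) ∧
        hsVal (hssFeasible n) (hssValue n) (Finset.univ.filter fun it => π it = p) = 1 ∧
        (typeI n (Finset.univ.filter fun it => π it = p) ∨
          typeII n (Finset.univ.filter fun it => π it = p))) ∧
      (Finset.univ.filter fun p : Fin n =>
        typeI n (Finset.univ.filter fun it => π it = p)).card = 2 * n / 3 ∧
      (Finset.univ.filter fun p : Fin n =>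
        typeII n (Finset.univ.filter fun it => π it = p)).card = n / 3) ∧
    1 ≤ hsMMS (hssFeasible n) (hssValue n) n := by
  obtain ⟨t, ht⟩ := hdvd
  have ht1 : 1 ≤ t := by omega
  set m : ℕ := 110 * t with hm
  have hn3 : n = 3 * m := by omega
  have h6 : ∀ j : Fin 6, j = 0 ∨ j = 1 ∨ j = 2 ∨ j = 3 ∨ j = 4 ∨ j = 5 := by decide
  -- the assignment is bounded
  have hbound : ∀ it : HssItem n, aN m it < n := by
    rintro ⟨k, i⟩
    have hi := i.isLt
    rcases h6 k with rfl | rfl | rfl | rfl | rfl | rfl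
    · rw [aN_0]; have hi' : i.val < n := i.isLt; omega
    · rw [aN_1]; have hi' : i.val < n / 3 := i.isLt; omega
    · rw [aN_2]; have hi' : i.val < 2 * n / 3 := i.isLt; omega
    · rw [aN_3]; have hi' : i.val < 2 * n / 3 := i.isLt; omega
    · rw [aN_4]; have hi' : i.val < n / 3 := i.isLt; omega
    · rw [aN_5]; have hi' : i.val < 40 * n := i.isLt; omega
  set π : HssItem n → Fin n := fun it => ⟨aN m it, hbound it⟩ with hπdef
  have hπ : ∀ it, (π it).val = aN m it := fun it => rfl
  -- master count lemma
  have master : ∀ (p : Fin n) (k : Fin 6),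
      ((Finset.univ.filter fun it : HssItem n => π it = p).filter fun it => it.1 = k).card
        = if p.val < 2 * m then ![1, 0, 1, 1, 0, 40] k else ![1, 1, 0, 0, 1, 40] k := by
    intro p k
    have hp : p.val < n := p.isLt
    rw [fiber_count m n π hπ p k]
    rcases h6 k with rfl | rfl | rfl | rfl | rfl | rfl
    · -- class A
      rw [card_filter_val' (classCount n 0)
        (fun i => aN m (⟨0, i⟩ : HssItem n) = p.val) (fun x => x = p.val)
        (fun i => by simp only [aN_0])]
      have he : ((Finset.range (classCount n 0)).filter fun x => x = p.val) = {p.val} := by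
        ext x
        simp only [Finset.mem_filter, Finset.mem_range, Finset.mem_singleton,
          show classCount n 0 = n from rfl]
        omega
      rw [he, Finset.card_singleton]
      split <;> rfl
    · -- class B
      rw [card_filter_val' (classCount n 1)
        (fun i => aN m (⟨1, i⟩ : HssItem n) = p.val) (fun x => 2 * m + x = p.val)
        (fun i => by simp only [aN_1])]
      by_cases hc : p.val < 2 * m
      · have he : ((Finset.range (classCount n 1)).filter fun x => 2 * m + x = p.val) = ∅ := by
          ext x
          simp only [Finset.mem_filter, Finset.mem_range, Finset.notMem_empty, iff_false,
            not_and]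
          omega
        rw [he, Finset.card_empty, if_pos hc]; rfl
      · have he : ((Finset.range (classCount n 1)).filter fun x => 2 * m + x = p.val)
            = {p.val - 2 * m} := by
          ext x
          simp only [Finset.mem_filter, Finset.mem_range, Finset.mem_singleton,
            show classCount n 1 = n / 3 from rfl]
          omega
        rw [he, Finset.card_singleton, if_neg hc]; rfl
    · -- class C
      rw [card_filter_val' (classCount n 2)
        (fun i => aN m (⟨2, i⟩ : HssItem n) = p.val) (fun x => x = p.val)
        (fun i => by simp only [aN_2])]
      by_cases hc : p.val < 2 * m
      · have he : ((Finset.range (classCount n 2)).filter fun x => x = p.val) = {p.val} := by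
          ext x
          simp only [Finset.mem_filter, Finset.mem_range, Finset.mem_singleton,
            show classCount n 2 = 2 * n / 3 from rfl]
          omega
        rw [he, Finset.card_singleton, if_pos hc]; rfl
      · have he : ((Finset.range (classCount n 2)).filter fun x => x = p.val) = ∅ := by
          ext x
          simp only [Finset.mem_filter, Finset.mem_range, Finset.notMem_empty, iff_false,
            not_and, show classCount n 2 = 2 * n / 3 from rfl]
          omega
        rw [he, Finset.card_empty, if_neg hc]; rfl
    · -- class D
      rw [card_filter_val' (classCount n 3)
        (fun i => aN m (⟨3, i⟩ : HssItem n) = p.val) (fun x => x = p.val)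
        (fun i => by simp only [aN_3])]
      by_cases hc : p.val < 2 * m
      · have he : ((Finset.range (classCount n 3)).filter fun x => x = p.val) = {p.val} := by
          ext x
          simp only [Finset.mem_filter, Finset.mem_range, Finset.mem_singleton,
            show classCount n 3 = 2 * n / 3 from rfl]
          omega
        rw [he, Finset.card_singleton, if_pos hc]; rfl
      · have he : ((Finset.range (classCount n 3)).filter fun x => x = p.val) = ∅ := by
          ext x
          simp only [Finset.mem_filter, Finset.mem_range, Finset.notMem_empty, iff_false,
            not_and, show classCount n 3 = 2 * n / 3 from rfl]
          omega
        rw [he, Finset.card_empty, if_neg hc]; rfl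
    · -- class E
      rw [card_filter_val' (classCount n 4)
        (fun i => aN m (⟨4, i⟩ : HssItem n) = p.val) (fun x => 2 * m + x = p.val)
        (fun i => by simp only [aN_4])]
      by_cases hc : p.val < 2 * m
      · have he : ((Finset.range (classCount n 4)).filter fun x => 2 * m + x = p.val) = ∅ := by
          ext x
          simp only [Finset.mem_filter, Finset.mem_range, Finset.notMem_empty, iff_false,
            not_and]
          omega
        rw [he, Finset.card_empty, if_pos hc]; rfl
      · have he : ((Finset.range (classCount n 4)).filter fun x => 2 * m + x = p.val)
            = {p.val - 2 * m} := by
          ext x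
          simp only [Finset.mem_filter, Finset.mem_range, Finset.mem_singleton,
            show classCount n 4 = n / 3 from rfl]
          omega
        rw [he, Finset.card_singleton, if_neg hc]; rfl
    · -- class F
      rw [card_filter_val' (classCount n 5)
        (fun i => aN m (⟨5, i⟩ : HssItem n) = p.val) (fun x => x / 40 = p.val)
        (fun i => by simp only [aN_5])]
      have he : ((Finset.range (classCount n 5)).filter fun x => x / 40 = p.val)
          = Finset.Ico (40 * p.val) (40 * p.val + 40) := by
        ext x
        simp only [Finset.mem_filter, Finset.mem_range, Finset.mem_Ico,
          show classCount n 5 = 40 * n from rfl]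
        omega
      rw [he, Nat.card_Ico, show 40 * p.val + 40 - 40 * p.val = 40 from by omega]
      split <;> rfl
  -- nonnegativity of values
  have hv_nonneg : ∀ j : HssItem n, 0 ≤ hssValue n j := by
    intro j
    show (0 : ℝ) ≤ classValue j.1
    rcases h6 j.1 with h | h | h | h | h | h <;> rw [h] <;> norm_num [classValue, vec6_0, vec6_1, vec6_2, vec6_3, vec6_4, vec6_5]
  -- feasibility of each fiber
  have hfeas : ∀ p : Fin n, hssFeasible n (Finset.univ.filter fun it => π it = p) := by
    intro p k
    rw [master p k]
    rcases h6 k with rfl | rfl | rfl | rfl | rfl | rfl <;> split <;>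
      simp only [classCap, vec6_0, vec6_1, vec6_2, vec6_3, vec6_4, vec6_5] <;> norm_num
  -- type of each fiber
  have htypeI : ∀ p : Fin n, p.val < 2 * m →
      typeI n (Finset.univ.filter fun it => π it = p) := by
    intro p hp k
    rw [master p k, if_pos hp]
  have htypeII : ∀ p : Fin n, ¬ p.val < 2 * m →
      typeII n (Finset.univ.filter fun it => π it = p) := by
    intro p hp k
    rw [master p k, if_neg hp]
  have htypeI' : ∀ p : Fin n,
      typeI n (Finset.univ.filter fun it => π it = p) ↔ p.val < 2 * m := by
    intro p
    constructor
    · intro h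
      by_contra hc
      have h1 := h 1
      rw [master p 1, if_neg hc] at h1
      exact absurd h1 (by simp only [vec6_1]; norm_num)
    · exact htypeI p
  have htypeII' : ∀ p : Fin n,
      typeII n (Finset.univ.filter fun it => π it = p) ↔ ¬ p.val < 2 * m := by
    intro p
    constructor
    · intro h hc
      have h1 := h 1
      rw [master p 1, if_pos hc] at h1
      exact absurd h1 (by simp only [vec6_1]; norm_num)
    · exact htypeII p
  -- value of each fiber
  have hval : ∀ p : Fin n,
      hsVal (hssFeasible n) (hssValue n) (Finset.univ.filter fun it => π it = p) = 1 := by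
    intro p
    rw [hsVal_eq_sum' _ _ _ (hfeas p) hv_nonneg]
    rw [← Finset.sum_fiberwise (Finset.univ.filter fun it : HssItem n => π it = p)
      (fun it => it.1) (hssValue n)]
    have hterm : ∀ k : Fin 6,
        (∑ j ∈ (Finset.univ.filter fun it : HssItem n => π it = p).filter
          fun it => it.1 = k, hssValue n j)
        = ((if p.val < 2 * m then ![1, 0, 1, 1, 0, 40] k else ![1, 1, 0, 0, 1, 40] k) : ℕ)
            * classValue k := by
      intro k
      rw [← master p k, ← nsmul_eq_mul, ← Finset.sum_const]
      apply Finset.sum_congr rfl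
      intro j hj
      rcases Finset.mem_filter.1 hj with ⟨_, hj2⟩
      show classValue j.1 = classValue k
      rw [hj2]
    rw [Finset.sum_congr rfl (fun k _ => hterm k)]
    by_cases hc : p.val < 2 * m
    · simp only [if_pos hc, Fin.sum_univ_six, classValue, vec6_0, vec6_1, vec6_2, vec6_3,
        vec6_4, vec6_5]
      push_cast
      norm_num
    · simp only [if_neg hc, Fin.sum_univ_six, classValue, vec6_0, vec6_1, vec6_2, vec6_3,
        vec6_4, vec6_5]
      push_cast
      norm_num
  refine ⟨⟨π, fun p => ⟨hfeas p, hval p, ?_⟩, ?_, ?_⟩, ?_⟩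
  · by_cases hc : p.val < 2 * m
    · exact Or.inl (htypeI p hc)
    · exact Or.inr (htypeII p hc)
  · -- number of type I parts
    have he : (Finset.univ.filter fun p : Fin n =>
        typeI n (Finset.univ.filter fun it => π it = p))
        = Finset.univ.filter fun p : Fin n => p.val < 2 * m := by
      apply Finset.filter_congr
      intro p _
      exact htypeI' p
    rw [he, card_filter_val' n (fun p : Fin n => p.val < 2 * m) (fun x => x < 2 * m)
      (fun i => Iff.rfl)]
    have he2 : ((Finset.range n).filter fun x => x < 2 * m) = Finset.range (2 * m) := by
      ext x
      simp only [Finset.mem_filter, Finset.mem_range]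
      omega
    rw [he2, Finset.card_range]
    omega
  · -- number of type II parts
    have he : (Finset.univ.filter fun p : Fin n =>
        typeII n (Finset.univ.filter fun it => π it = p))
        = Finset.univ.filter fun p : Fin n => ¬ p.val < 2 * m := by
      apply Finset.filter_congr
      intro p _
      exact htypeII' p
    rw [he, card_filter_val' n (fun p : Fin n => ¬ p.val < 2 * m) (fun x => ¬ x < 2 * m)
      (fun i => Iff.rfl)]
    have he2 : ((Finset.range n).filter fun x => ¬ x < 2 * m) = Finset.Ico (2 * m) n := by
      ext x
      simp only [Finset.mem_filter, Finset.mem_range, Finset.mem_Ico]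
      omega
    rw [he2, Nat.card_Ico]
    omega
  · -- the MMS bound
    have hinf : (⨅ k : Fin n, hsVal (hssFeasible n) (hssValue n)
        (Finset.univ.filter fun j => π j = k)) = 1 := by
      rw [show (fun k : Fin n => hsVal (hssFeasible n) (hssValue n)
        (Finset.univ.filter fun j => π j = k)) = fun _ => (1 : ℝ) from funext hval]
      haveI : Nonempty (Fin n) := ⟨⟨0, hn⟩⟩
      exact ciInf_const
    have hbdd : BddAbove (Set.range fun π' : HssItem n → Fin n =>
        ⨅ k : Fin n, hsVal (hssFeasible n) (hssValue n)
          (Finset.univ.filter fun j => π' j = k)) := by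
      refine ⟨∑ j, hssValue n j, ?_⟩
      rintro x ⟨π', rfl⟩
      have hblo : BddBelow (Set.range fun k : Fin n => hsVal (hssFeasible n) (hssValue n)
          (Finset.univ.filter fun j => π' j = k)) := by
        refine ⟨0, ?_⟩
        rintro y ⟨k, rfl⟩
        exact hsVal_nonneg' _ _ _
      exact le_trans (ciInf_le hblo ⟨0, hn⟩) (hsVal_le_total' _ _ _ hv_nonneg)
    rw [hsMMS]
    calc (1 : ℝ) = ⨅ k : Fin n, hsVal (hssFeasible n) (hssValue n)
          (Finset.univ.filter fun j => π j = k) := hinf.symm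
      _ ≤ _ := le_ciSup hbdd π
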